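/- For every real z ≥ 1 and every real δ > 0, the number of positive integers n ≤ z with φ(n)/n ≤ δ is less than 4.5·δ²·z. -/

import Mathlib

/-!
Let `w p = totientSqWeight p = (2p - 1) / (p (p - 1)²)`, so that `(p / (p - 1))² = 1 + p w(p)`.
Euler's product for `φ` then expands `(n / φ n)²` as `∑ d w(d)` over the squarefree divisors
`d ∣ n`, where `w(d) = ∏_{p ∣ d} w(p)`. Summing over `n ≤ N`, each `d` occurs `⌊N / d⌋ ≤ N / d`
times, so `∑_{n ≤ N} (n / φ n)² ≤ N ∏_{p ≤ N} (1 + w p) < 4.5 N`: the primes below `100`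
contribute at most `4.415` and, since `w p ≤ 1 / (p - 3) - 1 / (p - 1)` telescopes over the odd
numbers, the larger ones at most `exp (1 / 98) ≤ 98 / 97`. Every `n` with `φ(n) / n ≤ δ`
contributes at least `δ⁻²` to the sum.
-/

open Finset Nat

theorem Nat.prod_primeFactors_one_add {R : Type*} [CommSemiring R] (f : ℕ → R) {n : ℕ}
    (hn : n ≠ 0) :
    ∏ p ∈ n.primeFactors, (1 + f p) =
      ∑ d ∈ n.divisors with Squarefree d, ∏ p ∈ d.primeFactors, f p := by
  rw [sum_divisors_filter_squarefree hn, prod_one_add, factors_eq, List.toFinset_coe,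
    toFinset_factors]
  refine sum_congr rfl fun t ht => ?_
  rw [Finset.prod_val, Function.id_def,
    primeFactors_prod fun p hp => prime_of_mem_primeFactors (mem_powerset.mp ht hp)]

theorem sum_Ioc_sum_divisors_mul_le {R : Type*} [CommSemiring R] [PartialOrder R]
    [IsOrderedRing R] (g : ℕ → R) (hg : ∀ d, 0 ≤ g d) (N : ℕ) :
    ∑ n ∈ Ioc 0 N, ∑ d ∈ n.divisors, d * g d ≤ N * ∑ d ∈ Ioc 0 N, g d := by
  have hdiv : ∀ n ∈ Ioc 0 N, n.divisors = {d ∈ Ioc 0 N | d ∣ n} := by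
    intro n hn
    ext d
    simp only [mem_divisors, mem_filter, mem_Ioc] at hn ⊢
    constructor
    · rintro ⟨hdn, -⟩
      exact ⟨⟨Nat.pos_of_dvd_of_pos hdn hn.1, (Nat.le_of_dvd hn.1 hdn).trans hn.2⟩, hdn⟩
    · rintro ⟨-, hdn⟩
      exact ⟨hdn, hn.1.ne'⟩
  calc ∑ n ∈ Ioc 0 N, ∑ d ∈ n.divisors, d * g d
      = ∑ d ∈ Ioc 0 N, ∑ n ∈ Ioc 0 N with d ∣ n, d * g d := by
        rw [sum_congr rfl fun n hn => by rw [hdiv n hn, sum_filter], sum_comm]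
        simp_rw [sum_filter]
    _ = ∑ d ∈ Ioc 0 N, ((N / d : ℕ) * d : ℕ) * g d := by
        simp_rw [sum_const, Ioc_filter_dvd_card_eq_div, nsmul_eq_mul, Nat.cast_mul, mul_assoc]
    _ ≤ ∑ d ∈ Ioc 0 N, N * g d := by
        gcongr with d
        · exact hg d
        · exact Nat.div_mul_le_self N d
    _ = N * ∑ d ∈ Ioc 0 N, g d := (mul_sum ..).symm

theorem sum_squarefree_prod_primeFactors_le {R : Type*} [CommSemiring R] [PartialOrder R]
    [IsOrderedRing R] (w : ℕ → R) (hw : ∀ p, 0 ≤ w p) (N : ℕ) :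
    ∑ d ∈ Ioc 0 N with Squarefree d, ∏ p ∈ d.primeFactors, w p ≤
      ∏ p ∈ primesLE N, (1 + w p) := by
  rw [← primeFactors_primorial, Nat.prod_primeFactors_one_add w (primorial_ne_zero N)]
  refine sum_le_sum_of_subset_of_nonneg ?_ fun d _ _ => prod_nonneg fun p _ => hw p
  intro d hd
  simp only [mem_filter, mem_Ioc] at hd
  obtain ⟨⟨hd0, hdN⟩, hsq⟩ := hd
  refine mem_filter.mpr ⟨mem_divisors.mpr ⟨?_, primorial_ne_zero N⟩, hsq⟩
  rw [← prod_primeFactors_of_squarefree hsq, primorial_eq_prod_primesLE]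
  refine prod_dvd_prod_of_subset _ _ _ fun p hp =>
    mem_primesLE.mpr ⟨?_, prime_of_mem_primeFactors hp⟩
  exact (Nat.le_of_dvd hd0 (dvd_of_mem_primeFactors hp)).trans hdN

noncomputable def totientSqWeight (p : ℕ) : ℝ := (2 * p - 1) / (p * (p - 1) ^ 2)

lemma totientSqWeight_nonneg (p : ℕ) : 0 ≤ totientSqWeight p := by
  rcases p.eq_zero_or_pos with rfl | hp
  · simp [totientSqWeight]
  have : (1 : ℝ) ≤ p := by exact_mod_cast hp
  exact div_nonneg (by linarith) (by positivity)

lemma one_add_mul_totientSqWeight {p : ℕ} (hp : p.Prime) :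
    1 + p * totientSqWeight p = ((p : ℝ) / (p - 1 : ℕ)) ^ 2 := by
  have h1 : (1 : ℝ) < p := by exact_mod_cast hp.one_lt
  have h2 : (p : ℝ) - 1 ≠ 0 := by linarith
  rw [totientSqWeight, Nat.cast_sub hp.one_le, Nat.cast_one]
  field_simp
  ring

lemma sq_div_totient_eq_prod {n : ℕ} (hn : n ≠ 0) :
    ((n : ℝ) / φ n) ^ 2 = ∏ p ∈ n.primeFactors, (1 + p * totientSqWeight p) := by
  have hφ : (φ n : ℝ) ≠ 0 := by exact_mod_cast (totient_pos.mpr (Nat.pos_of_ne_zero hn)).ne'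
  have hprod : (∏ p ∈ n.primeFactors, ((p - 1 : ℕ) : ℝ)) ≠ 0 :=
    prod_ne_zero_iff.mpr fun p hp => by
      exact_mod_cast (Nat.sub_pos_of_lt (prime_of_mem_primeFactors hp).one_lt).ne'
  have key : (n : ℝ) / φ n = ∏ p ∈ n.primeFactors, ((p : ℝ) / (p - 1 : ℕ)) := by
    have h := congrArg (Nat.cast (R := ℝ)) (totient_mul_prod_primeFactors n)
    push_cast at h
    rw [prod_div_distrib, div_eq_div_iff hφ hprod, ← h, mul_comm]
  rw [key, ← prod_pow]
  exact prod_congr rfl fun p hp =>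
    (one_add_mul_totientSqWeight (prime_of_mem_primeFactors hp)).symm

lemma totientSqWeight_le_sub {p : ℕ} (hp : 3 < p) :
    totientSqWeight p ≤ 1 / ((p : ℝ) - 3) - 1 / ((p : ℝ) - 1) := by
  have h : (3 : ℝ) < p := by exact_mod_cast hp
  rw [totientSqWeight, div_sub_div _ _ (by linarith) (by linarith),
    div_le_div_iff₀ (mul_pos (by linarith) (pow_pos (by linarith) 2))
      (mul_pos (by linarith) (by linarith))]
  nlinarith

lemma sum_sq_div_totient_le (N : ℕ) :
    ∑ n ∈ Ioc 0 N, ((n : ℝ) / φ n) ^ 2 ≤ N * ∏ p ∈ primesLE N, (1 + totientSqWeight p) := by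
  set g : ℕ → ℝ := fun d => if Squarefree d then ∏ p ∈ d.primeFactors, totientSqWeight p else 0
  have hg : ∀ d, 0 ≤ g d := fun d => by
    unfold g; split_ifs
    exacts [prod_nonneg fun p _ => totientSqWeight_nonneg p, le_rfl]
  calc ∑ n ∈ Ioc 0 N, ((n : ℝ) / φ n) ^ 2
      = ∑ n ∈ Ioc 0 N, ∑ d ∈ n.divisors, d * g d := by
        refine sum_congr rfl fun n hn => ?_
        have hn0 : n ≠ 0 := (mem_Ioc.mp hn).1.ne'
        rw [sq_div_totient_eq_prod hn0, Nat.prod_primeFactors_one_add _ hn0, sum_filter]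
        refine sum_congr rfl fun d _ => ?_
        unfold g; split_ifs with hd
        · rw [prod_mul_distrib, ← Nat.cast_prod, prod_primeFactors_of_squarefree hd]
        · rw [mul_zero]
    _ ≤ N * ∑ d ∈ Ioc 0 N, g d := sum_Ioc_sum_divisors_mul_le g hg N
    _ ≤ N * ∏ p ∈ primesLE N, (1 + totientSqWeight p) := by
        rw [← sum_filter]
        gcongr
        exact sum_squarefree_prod_primeFactors_le _ totientSqWeight_nonneg N

lemma sum_totientSqWeight_gt_100_le (N : ℕ) :
    ∑ p ∈ primesLE N with 100 < p, totientSqWeight p ≤ 1 / 98 := by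
  set u : ℕ → ℝ := fun p => 1 / ((p : ℝ) - 3) - 1 / ((p : ℝ) - 1)
  have hsub : {p ∈ primesLE N | 100 < p} ⊆ (range N).image (fun k => 2 * k + 101) := by
    intro p hp
    obtain ⟨⟨hpN, hprime⟩, h100⟩ := (mem_filter.mp hp).imp_left mem_primesLE.mp
    obtain ⟨m, rfl⟩ := hprime.odd_of_ne_two (by omega)
    exact mem_image.mpr ⟨m - 50, mem_range.mpr (by omega), by omega⟩
  calc ∑ p ∈ primesLE N with 100 < p, totientSqWeight p
      ≤ ∑ p ∈ primesLE N with 100 < p, u p :=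
        sum_le_sum fun p hp => totientSqWeight_le_sub (by have := (mem_filter.mp hp).2; omega)
    _ ≤ ∑ p ∈ (range N).image (fun k => 2 * k + 101), u p := by
        refine sum_le_sum_of_subset_of_nonneg hsub fun p hp _ => ?_
        obtain ⟨k, -, rfl⟩ := mem_image.mp hp
        simp only [u, sub_nonneg]
        push_cast
        gcongr <;> linarith
    _ = ∑ k ∈ range N, (1 / (2 * (k : ℝ) + 98) - 1 / (2 * ((k + 1 : ℕ) : ℝ) + 98)) := by
        rw [sum_image fun a _ b _ h => by omega]
        refine sum_congr rfl fun k _ => ?_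
        simp only [u]
        push_cast
        ring_nf
    _ ≤ 1 / 98 := by
        rw [sum_range_sub' (fun k : ℕ => 1 / (2 * (k : ℝ) + 98))]
        norm_num
        positivity

lemma prod_primesLE_100_le : ∏ p ∈ primesLE 100, (1 + totientSqWeight p) ≤ 4.415 := by
  rw [show primesLE 100 = {2, 3, 5, 7, 11, 13, 17, 19, 23, 29, 31, 37, 41, 43, 47, 53, 59, 61, 67,
    71, 73, 79, 83, 89, 97} by decide]
  norm_num [prod_insert, totientSqWeight]

lemma prod_primesLE_one_add_totientSqWeight_lt (N : ℕ) :
    ∏ p ∈ primesLE N, (1 + totientSqWeight p) < 4.5 := by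
  have hone : ∀ p, 1 ≤ 1 + totientSqWeight p := fun p =>
    le_add_of_nonneg_right (totientSqWeight_nonneg p)
  have hsmall : ∏ p ∈ primesLE N with p ≤ 100, (1 + totientSqWeight p) ≤ 4.415 := by
    refine le_trans (prod_le_prod_of_subset_of_one_le ?_ (fun p _ => zero_le_one.trans (hone p))
      fun p _ _ => hone p) prod_primesLE_100_le
    intro p hp
    rw [mem_filter, mem_primesLE] at hp
    exact mem_primesLE.mpr ⟨hp.2, hp.1.2⟩
  have hlarge : ∏ p ∈ primesLE N with ¬p ≤ 100, (1 + totientSqWeight p) ≤ 98 / 97 :=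
    calc ∏ p ∈ primesLE N with ¬p ≤ 100, (1 + totientSqWeight p)
        ≤ Real.exp (∑ p ∈ primesLE N with ¬p ≤ 100, totientSqWeight p) :=
          Real.prod_one_add_le_exp_sum _ totientSqWeight_nonneg
      _ ≤ Real.exp (1 / 98) := by
          gcongr
          simpa only [not_le] using sum_totientSqWeight_gt_100_le N
      _ ≤ 1 / (1 - 1 / 98) := Real.exp_bound_div_one_sub_of_interval (by norm_num) (by norm_num)
      _ = 98 / 97 := by norm_num
  rw [← prod_filter_mul_prod_filter_not (primesLE N) (· ≤ 100)]
  calc _ ≤ (4.415 : ℝ) * (98 / 97) :=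
        mul_le_mul hsmall hlarge (prod_nonneg fun p _ => zero_le_one.trans (hone p)) (by norm_num)
    _ < 4.5 := by norm_num

lemma one_le_sq_mul_sq_div_totient {n : ℕ} (hn : n ≠ 0) {δ : ℝ} (hδ : (φ n : ℝ) / n ≤ δ) :
    1 ≤ δ ^ 2 * ((n : ℝ) / φ n) ^ 2 := by
  have hpos : (0 : ℝ) < φ n / n := by
    have : 0 < φ n := totient_pos.mpr (Nat.pos_of_ne_zero hn)
    positivity
  rw [← mul_pow, ← inv_div, ← div_eq_mul_inv]
  exact one_le_pow₀ ((one_le_div hpos).mpr hδ)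

lemma card_totient_div_le_le (δ : ℝ) (N : ℕ) :
    (#{n ∈ Ioc 0 N | (φ n : ℝ) / n ≤ δ} : ℝ) ≤ δ ^ 2 * ∑ n ∈ Ioc 0 N, ((n : ℝ) / φ n) ^ 2 :=
  calc (#{n ∈ Ioc 0 N | (φ n : ℝ) / n ≤ δ} : ℝ)
      ≤ ∑ n ∈ Ioc 0 N with (φ n : ℝ) / n ≤ δ, δ ^ 2 * ((n : ℝ) / φ n) ^ 2 := by
        rw [card_eq_sum_ones, Nat.cast_sum, Nat.cast_one]
        refine sum_le_sum fun n hn => ?_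
        obtain ⟨hn, hδn⟩ := mem_filter.mp hn
        exact one_le_sq_mul_sq_div_totient (mem_Ioc.mp hn).1.ne' hδn
    _ ≤ δ ^ 2 * ∑ n ∈ Ioc 0 N, ((n : ℝ) / φ n) ^ 2 := by
        rw [← mul_sum]
        exact mul_le_mul_of_nonneg_left (sum_le_sum_of_subset_of_nonneg (filter_subset _ _)
          fun _ _ _ => by positivity) (by positivity)

/-- For every real `z ≥ 1` and every `δ > 0`, the number of positive integers `n ≤ z` with
`φ(n)/n ≤ δ` is less than `4.5·δ²·z`. -/
theorem stmt_17 (z : ℝ) (hz : 1 ≤ z) (δ : ℝ) (hδ : 0 < δ) :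
    ({n : ℕ | 1 ≤ n ∧ (n : ℝ) ≤ z ∧ (Nat.totient n : ℝ) / n ≤ δ}.ncard : ℝ) <
      4.5 * δ ^ 2 * z := by
  set N := ⌊z⌋₊
  have hz0 : 0 ≤ z := by linarith
  have hset : {n : ℕ | 1 ≤ n ∧ (n : ℝ) ≤ z ∧ (Nat.totient n : ℝ) / n ≤ δ} =
      ↑({n ∈ Ioc 0 N | (φ n : ℝ) / n ≤ δ}) := by
    ext n
    simp only [Set.mem_ofPred_eq, coe_filter, mem_Ioc, ← Nat.le_floor_iff hz0,
      Nat.lt_iff_add_one_le, zero_add, and_assoc]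
    rfl
  rw [hset, Set.ncard_coe_finset]
  calc _ ≤ δ ^ 2 * (N * ∏ p ∈ primesLE N, (1 + totientSqWeight p)) :=
        (card_totient_div_le_le δ N).trans (by gcongr; exact sum_sq_div_totient_le N)
    _ ≤ δ ^ 2 * (z * ∏ p ∈ primesLE N, (1 + totientSqWeight p)) := by
        gcongr
        · exact prod_nonneg fun p _ => add_nonneg zero_le_one (totientSqWeight_nonneg p)
        · exact Nat.floor_le hz0
    _ < δ ^ 2 * (z * 4.5) := by
        gcongr
        exact prod_primesLE_one_add_totientSqWeight_lt N
    _ = 4.5 * δ ^ 2 * z := by ring
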